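/- In the canonical game, for every play (δ,ω) ∈ P and every formula with ¬Nφ ∈ ω, there exists a play (δ',ω') ∈ P such that ¬φ ∈ ω'. -/

import Mathlib

/-- Formulas of the logic of blameworthiness with sacrifice over agent type `A`:
propositional variables, negation, implication, the universal modality `N`,
and the blameworthiness modality `B s C φ` ("coalition `C` is blameable for `φ`
with degree (sacrifice) `s`"). -/
inductive Formula (A : Type) : Type where
  | var : ℕ → Formula A
  | neg : Formula A → Formula A
  | impl : Formula A → Formula A → Formula A
  | N : Formula A → Formula A
  | B : ℝ → Finset A → Formula A → Formula A

namespace Formula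

/-- Disjunction, defined as usual. -/
def or {A : Type} (φ ψ : Formula A) : Formula A := (φ.neg).impl ψ

/-- Conjunction, defined as usual. -/
def and {A : Type} (φ ψ : Formula A) : Formula A := (φ.impl ψ.neg).neg

/-- The modality `N̄ φ := ¬ N ¬ φ` ("φ holds at some play"). -/
def nbar {A : Type} (φ : Formula A) : Formula A := (Formula.N φ.neg).neg

/-- A contradictory formula (used as the empty disjunction). -/
def fbot {A : Type} : Formula A := ((Formula.var 0).impl (Formula.var 0)).neg

end Formula

/-- Finite disjunction `χ₁ ∨ ⋯ ∨ χₙ` of a list of formulas. -/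
def bigOr {A : Type} : List (Formula A) → Formula A
  | [] => Formula.fbot
  | φ :: l => l.foldl Formula.or φ

/-- A game `(Δ, ‖·‖, d₀, Ω, P, π)`: a nonempty set of actions `Δ` with
nonnegative costs and a zero-cost action `d₀`, a set of outcomes `Ω`,
a set of plays `P` (pairs of a complete action profile and an outcome),
and a valuation `π` of propositional variables by sets of plays. -/
structure Game (A : Type) where
  Δ : Type
  Ω : Type
  cost : Δ → ℝ
  cost_nonneg : ∀ d : Δ, 0 ≤ cost d
  d0 : Δ
  cost_d0 : cost d0 = 0
  P : Set ((A → Δ) × Ω)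
  π : ℕ → Set ((A → Δ) × Ω)

/-- Satisfaction relation `(δ,ω) ⊨ φ`.  In particular
`(δ,ω) ⊨ B s C φ` iff `(δ,ω) ⊨ φ` and there is an action profile `γ` of the
coalition `C` of total cost `∑ a ∈ C, ‖γ(a)‖ ≤ s` such that every play
agreeing with `γ` on `C` falsifies `φ`. -/
def Sat {A : Type} (G : Game A) : ((A → G.Δ) × G.Ω) → Formula A → Prop
  | p, .var n => p ∈ G.π n
  | p, .neg φ => ¬ Sat G p φ
  | p, .impl φ ψ => Sat G p φ → Sat G p ψ
  | _, .N φ => ∀ q ∈ G.P, Sat G q φ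
  | p, .B s C φ => Sat G p φ ∧ ∃ γ : A → G.Δ,
      (∑ a ∈ C, G.cost (γ a)) ≤ s ∧
      ∀ q ∈ G.P, (∀ a ∈ C, q.1 a = γ a) → ¬ Sat G q φ

/-- A formula is a propositional tautology if it evaluates to true under every
Boolean valuation of formulas that respects negation and implication. -/
def Tautology {A : Type} (φ : Formula A) : Prop :=
  ∀ v : Formula A → Bool,
    (∀ ψ : Formula A, v ψ.neg = !(v ψ)) →
    (∀ ψ χ : Formula A, v (ψ.impl χ) = (!(v ψ) || v χ)) →
    v φ = true

/-- Theorems of the logic of blameworthiness with sacrifice: propositional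
tautologies, the Truth, Distributivity, Negative Introspection, None to Blame,
Monotonicity, Joint Responsibility, Blame for Cause, and Fairness axioms,
closed under Modus Ponens and Necessitation. -/
inductive Prov {A : Type} [DecidableEq A] : Formula A → Prop
  | taut {φ : Formula A} : Tautology φ → Prov φ
  | truthN {φ : Formula A} : Prov ((Formula.N φ).impl φ)
  | truthB {s : ℝ} {C : Finset A} {φ : Formula A} (hs : 0 ≤ s) :
      Prov ((Formula.B s C φ).impl φ)
  | distr {φ ψ : Formula A} :
      Prov ((Formula.N (φ.impl ψ)).impl ((Formula.N φ).impl (Formula.N ψ)))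
  | negIntro {φ : Formula A} :
      Prov (((Formula.N φ).neg).impl (Formula.N ((Formula.N φ).neg)))
  | noneToBlame {s : ℝ} {φ : Formula A} (hs : 0 ≤ s) :
      Prov ((Formula.B s (∅ : Finset A) φ).neg)
  | mono {s t : ℝ} {C D : Finset A} {φ : Formula A}
      (hs : 0 ≤ s) (hst : s ≤ t) (hCD : C ⊆ D) :
      Prov ((Formula.B s C φ).impl (Formula.B t D φ))
  | joint {s t : ℝ} {C D : Finset A} {φ ψ : Formula A}
      (hs : 0 ≤ s) (ht : 0 ≤ t) (hCD : Disjoint C D) :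
      Prov (((Formula.B s C φ).nbar.and (Formula.B t D ψ).nbar).impl
        ((φ.or ψ).impl (Formula.B (s + t) (C ∪ D) (φ.or ψ))))
  | cause {s : ℝ} {C : Finset A} {φ ψ : Formula A} (hs : 0 ≤ s) :
      Prov ((Formula.N (φ.impl ψ)).impl
        ((Formula.B s C ψ).impl (φ.impl (Formula.B s C φ))))
  | fair {s : ℝ} {C : Finset A} {φ : Formula A} (hs : 0 ≤ s) :
      Prov ((Formula.B s C φ).impl (Formula.N (φ.impl (Formula.B s C φ))))
  | mp {φ ψ : Formula A} : Prov (φ.impl ψ) → Prov φ → Prov ψ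
  | nec {φ : Formula A} : Prov φ → Prov (Formula.N φ)

/-- Derivability `X ⊢ φ` from a set of hypotheses: hypotheses and theorems of
the logic, closed under Modus Ponens. -/
inductive Derives {A : Type} [DecidableEq A] (X : Set (Formula A)) : Formula A → Prop
  | hyp {φ : Formula A} : φ ∈ X → Derives X φ
  | thm {φ : Formula A} : Prov φ → Derives X φ
  | mp {φ ψ : Formula A} : Derives X (φ.impl ψ) → Derives X φ → Derives X ψ

/-- A set of formulas is consistent if it cannot derive both a formula and its
negation. -/
def Consistent {A : Type} [DecidableEq A] (X : Set (Formula A)) : Prop :=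
  ∀ φ : Formula A, ¬ (Derives X φ ∧ Derives X φ.neg)

/-- Maximal consistent sets of formulas. -/
def MCS {A : Type} [DecidableEq A] (X : Set (Formula A)) : Prop :=
  Consistent X ∧ ∀ φ : Formula A, φ ∈ X ∨ φ.neg ∈ X

/-- Actions of the canonical game: the zero-cost action `d₀` (`none`) together
with all triples `(φ, C, s)` where `C` is a nonempty coalition and `s ≥ 0`. -/
def CanAct (A : Type) : Type :=
  Option {x : Formula A × Finset A × ℝ // x.2.1.Nonempty ∧ 0 ≤ x.2.2}

/-- Outcomes of the canonical game for `ω₀`: maximal consistent sets `ω` such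
that `ψ ∈ ω` whenever `N ψ ∈ ω₀`. -/
def CanOutcome {A : Type} [DecidableEq A] (ω₀ : Set (Formula A)) : Type :=
  {ω : Set (Formula A) // MCS ω ∧ ∀ φ : Formula A, Formula.N φ ∈ ω₀ → φ ∈ ω}

/-- Plays of the canonical game for `ω₀`: pairs `(δ, ω)` such that for every
formula `¬N¬B^s_C ψ ∈ ω₀`, if every member of `C` votes `(ψ, C, s)`, then
`¬ψ ∈ ω`. -/
def canonicalP {A : Type} [DecidableEq A] (ω₀ : Set (Formula A)) :
    Set ((A → CanAct A) × CanOutcome ω₀) :=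
  {p | ∀ (ψ : Formula A) (C : Finset A) (s : ℝ) (h : C.Nonempty ∧ 0 ≤ s),
        (Formula.B s C ψ).nbar ∈ ω₀ →
        (∀ a ∈ C, p.1 a = some ⟨(ψ, C, s), h⟩) → ψ.neg ∈ p.2.1}

/-- The canonical game `G(ω₀)` for a maximal consistent set `ω₀`.  The cost of
`d₀` is `0` and the cost of a triple `(φ, C, s)` is `s / |C|`. -/
noncomputable def canonicalGame {A : Type} [DecidableEq A] (ω₀ : Set (Formula A)) : Game A where
  Δ := CanAct A
  Ω := CanOutcome ω₀
  cost := fun d => match d with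
    | none => 0
    | some x => x.1.2.2 / x.1.2.1.card
  cost_nonneg := by
    rintro (_ | x)
    · exact le_refl 0
    · exact div_nonneg x.2.2 (Nat.cast_nonneg _)
  d0 := none
  cost_d0 := rfl
  P := canonicalP ω₀
  π := fun n => {p ∈ canonicalP ω₀ | Formula.var n ∈ p.2.1}

/-!
If `Nφ ∈ ω₀` then, by positive introspection, `NNφ ∈ ω₀`, so every outcome contains `Nφ`; hence
`¬Nφ` in some outcome forces `¬Nφ ∈ ω₀`. Then `{¬φ} ∪ {ψ | Nψ ∈ ω₀}` is consistent, since
otherwise `φ` is derivable from `{ψ | Nψ ∈ ω₀}`, and necessitation with distributivity turns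
that derivation into one of `Nφ` from `ω₀`. A Lindenbaum extension of this set is an outcome, and paired with the
profile in which everybody plays `d₀` it is a play: no coalition is then voting.
-/

section

variable {A : Type}

namespace Tautology

theorem impl_self (φ : Formula A) : Tautology (φ.impl φ) := by
  intro v _ hi; simp [hi]

theorem impl_impl_left (φ ψ : Formula A) : Tautology (ψ.impl (φ.impl ψ)) := by
  intro v _ hi; simp only [hi]; cases v φ <;> cases v ψ <;> rfl

theorem impl_distrib (φ ψ χ : Formula A) :
    Tautology ((φ.impl (ψ.impl χ)).impl ((φ.impl ψ).impl (φ.impl χ))) := by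
  intro v _ hi; simp only [hi]; cases v φ <;> cases v ψ <;> cases v χ <;> rfl

theorem impl_trans (φ ψ χ : Formula A) :
    Tautology ((φ.impl ψ).impl ((ψ.impl χ).impl (φ.impl χ))) := by
  intro v _ hi; simp only [hi]; cases v φ <;> cases v ψ <;> cases v χ <;> rfl

theorem contrapose (φ ψ : Formula A) : Tautology ((φ.impl ψ).impl (ψ.neg.impl φ.neg)) := by
  intro v hn hi; simp only [hi, hn]; cases v φ <;> cases v ψ <;> rfl

theorem neg_neg_impl (φ : Formula A) : Tautology (φ.neg.neg.impl φ) := by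
  intro v hn hi; simp only [hi, hn]; cases v φ <;> rfl

theorem impl_neg_neg (φ : Formula A) : Tautology (φ.impl φ.neg.neg) := by
  intro v hn hi; simp only [hi, hn]; cases v φ <;> rfl

theorem neg_intro (φ ψ : Formula A) :
    Tautology ((φ.impl ψ).impl ((φ.impl ψ.neg).impl φ.neg)) := by
  intro v hn hi; simp only [hi, hn]; cases v φ <;> cases v ψ <;> rfl

end Tautology

variable [DecidableEq A]

namespace Prov

theorem impl_trans {φ ψ χ : Formula A} (h₁ : Prov (φ.impl ψ)) (h₂ : Prov (ψ.impl χ)) :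
    Prov (φ.impl χ) :=
  ((taut (Tautology.impl_trans φ ψ χ)).mp h₁).mp h₂

theorem contrapose {φ ψ : Formula A} (h : Prov (φ.impl ψ)) : Prov (ψ.neg.impl φ.neg) :=
  (taut (Tautology.contrapose φ ψ)).mp h

theorem N_impl_N_N (φ : Formula A) : Prov ((Formula.N φ).impl (Formula.N (Formula.N φ))) := by
  set a := Formula.N φ
  have to_nbar : Prov (a.impl (Formula.N a.neg).neg) :=
    impl_trans (taut (Tautology.impl_neg_neg a)) (contrapose truthN)
  have of_nbar : Prov ((Formula.N a.neg).neg.impl a) :=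
    impl_trans (contrapose negIntro) (taut (Tautology.neg_neg_impl a))
  exact impl_trans to_nbar (impl_trans negIntro (distr.mp (nec of_nbar)))

end Prov

namespace Derives

variable {X Y : Set (Formula A)} {φ ψ : Formula A}

theorem mono (hXY : X ⊆ Y) (h : Derives X φ) : Derives Y φ := by
  induction h with
  | hyp h => exact hyp (hXY h)
  | thm h => exact thm h
  | mp _ _ ih₁ ih₂ => exact ih₁.mp ih₂

theorem taut_mp (ht : Tautology (φ.impl ψ)) (h : Derives X φ) : Derives X ψ :=
  (thm (Prov.taut ht)).mp h

theorem impl_of_insert (h : Derives (insert φ X) ψ) : Derives X (φ.impl ψ) := by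
  induction h with
  | hyp h =>
    rcases h with rfl | h
    · exact thm (Prov.taut (Tautology.impl_self _))
    · exact taut_mp (Tautology.impl_impl_left φ _) (hyp h)
  | thm h => exact taut_mp (Tautology.impl_impl_left φ _) (thm h)
  | mp _ _ ih₁ ih₂ => exact (taut_mp (Tautology.impl_distrib φ _ _) ih₁).mp ih₂

theorem exists_finite (h : Derives X φ) : ∃ Y ⊆ X, Y.Finite ∧ Derives Y φ := by
  induction h with
  | @hyp φ h => exact ⟨{φ}, Set.singleton_subset_iff.2 h, Set.finite_singleton φ, hyp rfl⟩
  | thm h => exact ⟨∅, Set.empty_subset X, Set.finite_empty, thm h⟩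
  | mp _ _ ih₁ ih₂ =>
    obtain ⟨Y₁, hY₁, hf₁, hd₁⟩ := ih₁
    obtain ⟨Y₂, hY₂, hf₂, hd₂⟩ := ih₂
    exact ⟨Y₁ ∪ Y₂, Set.union_subset hY₁ hY₂, hf₁.union hf₂,
      (hd₁.mono Set.subset_union_left).mp (hd₂.mono Set.subset_union_right)⟩

theorem neg_of_not_consistent_insert (h : ¬ Consistent (insert φ X)) : Derives X φ.neg := by
  simp only [Consistent, not_forall, not_not] at h
  obtain ⟨χ, h₁, h₂⟩ := h
  exact (taut_mp (Tautology.neg_intro φ χ) (impl_of_insert h₁)).mp (impl_of_insert h₂)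

theorem N_of_setOf_N_mem (h : Derives {ψ | Formula.N ψ ∈ X} φ) : Derives X (Formula.N φ) := by
  induction h with
  | hyp h => exact hyp h
  | thm h => exact thm (Prov.nec h)
  | mp _ _ ih₁ ih₂ => exact ((thm Prov.distr).mp ih₁).mp ih₂

end Derives

theorem Consistent.mono {X Y : Set (Formula A)} (hY : Consistent Y) (hXY : X ⊆ Y) :
    Consistent X :=
  fun φ h => hY φ ⟨h.1.mono hXY, h.2.mono hXY⟩

theorem isOfFiniteCharacter_consistent :
    Order.IsOfFiniteCharacter {X : Set (Formula A) | Consistent X} := by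
  refine fun X => ⟨fun hX Y hYX _ => hX.mono hYX, fun hfin φ ⟨h₁, h₂⟩ => ?_⟩
  obtain ⟨Y₁, hY₁, hf₁, hd₁⟩ := h₁.exists_finite
  obtain ⟨Y₂, hY₂, hf₂, hd₂⟩ := h₂.exists_finite
  exact hfin (Y₁ ∪ Y₂) (Set.union_subset hY₁ hY₂) (hf₁.union hf₂) φ
    ⟨hd₁.mono Set.subset_union_left, hd₂.mono Set.subset_union_right⟩

theorem Consistent.exists_MCS_superset {X : Set (Formula A)} (hX : Consistent X) :
    ∃ M, X ⊆ M ∧ MCS M := by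
  obtain ⟨M, hXM, hMcons, hMmax⟩ := isOfFiniteCharacter_consistent.exists_maximal hX
  have neg_of_not_mem : ∀ ψ ∉ M, Derives M ψ.neg := fun ψ hψ =>
    Derives.neg_of_not_consistent_insert fun hcons =>
      hψ (hMmax hcons (Set.subset_insert ψ M) (Set.mem_insert ψ M))
  refine ⟨M, hXM, hMcons, fun φ => ?_⟩
  by_contra! h
  exact hMcons φ.neg ⟨neg_of_not_mem φ h.1, neg_of_not_mem φ.neg h.2⟩

theorem MCS.mem_of_derives {M : Set (Formula A)} {φ : Formula A} (hM : MCS M)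
    (h : Derives M φ) : φ ∈ M :=
  (hM.2 φ).resolve_right fun hneg => hM.1 φ ⟨h, Derives.hyp hneg⟩

theorem Consistent.insert_neg_setOf_N_mem {X : Set (Formula A)} {φ : Formula A}
    (hX : Consistent X) (h : (Formula.N φ).neg ∈ X) :
    Consistent (insert φ.neg {ψ | Formula.N ψ ∈ X}) := by
  intro χ hχ
  have hφ : Derives {ψ | Formula.N ψ ∈ X} φ :=
    (Derives.neg_of_not_consistent_insert fun hcons => hcons χ hχ).taut_mp
      (Tautology.neg_neg_impl φ)
  exact hX (Formula.N φ) ⟨hφ.N_of_setOf_N_mem, Derives.hyp h⟩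

namespace CanOutcome

variable {ω₀ : Set (Formula A)} {φ : Formula A}

theorem neg_N_mem_of_neg_N_mem (hω₀ : MCS ω₀) (ω : CanOutcome ω₀) (h : (Formula.N φ).neg ∈ ω.1) :
    (Formula.N φ).neg ∈ ω₀ := by
  refine (hω₀.2 (Formula.N φ)).resolve_left fun hN => ?_
  have hNN : Formula.N (Formula.N φ) ∈ ω₀ :=
    hω₀.mem_of_derives ((Derives.thm (Prov.N_impl_N_N φ)).mp (Derives.hyp hN))
  exact ω.2.1.1 (Formula.N φ) ⟨Derives.hyp (ω.2.2 _ hNN), Derives.hyp h⟩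

theorem exists_neg_mem (hω₀ : MCS ω₀) (h : (Formula.N φ).neg ∈ ω₀) :
    ∃ ω : CanOutcome ω₀, φ.neg ∈ ω.1 := by
  obtain ⟨M, hXM, hM⟩ := (hω₀.1.insert_neg_setOf_N_mem h).exists_MCS_superset
  exact ⟨⟨M, hM, fun ψ hψ => hXM (Set.mem_insert_of_mem _ hψ)⟩, hXM (Set.mem_insert _ _)⟩

end CanOutcome

theorem const_none_mem_canonicalP {ω₀ : Set (Formula A)} (ω : CanOutcome ω₀) :
    ((fun _ => none, ω) : (A → CanAct A) × CanOutcome ω₀) ∈ canonicalP ω₀ :=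
  fun _ _ _ h _ hvote => nomatch hvote _ h.1.choose_spec

end

theorem canonical_N_witness_exists_general {A : Type} [DecidableEq A]
    (ω₀ : Set (Formula A)) (hω₀ : MCS ω₀)
    (p : (A → (canonicalGame ω₀).Δ) × (canonicalGame ω₀).Ω)
    (φ : Formula A) (hmem : (Formula.N φ).neg ∈ p.2.1) :
    ∃ q ∈ (canonicalGame ω₀).P, φ.neg ∈ q.2.1 := by
  have hbase := CanOutcome.neg_N_mem_of_neg_N_mem hω₀ p.2 hmem
  obtain ⟨ω, hω⟩ := CanOutcome.exists_neg_mem hω₀ hbase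
  exact ⟨(fun _ => none, ω), const_none_mem_canonicalP ω, hω⟩

/-- In the canonical game for a maximal consistent set `ω₀`, for
every play `(δ,ω) ∈ P` and every formula with `¬Nφ ∈ ω`, there is a play
`(δ',ω') ∈ P` with `¬φ ∈ ω'`. -/
theorem canonical_N_witness_exists {A : Type} [DecidableEq A]
    (ω₀ : Set (Formula A)) (hω₀ : MCS ω₀)
    (p : (A → (canonicalGame ω₀).Δ) × (canonicalGame ω₀).Ω)
    (hp : p ∈ (canonicalGame ω₀).P)
    (φ : Formula A) (hmem : (Formula.N φ).neg ∈ p.2.1) :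
    ∃ q ∈ (canonicalGame ω₀).P, φ.neg ∈ q.2.1 :=
  canonical_N_witness_exists_general ω₀ hω₀ p φ hmem
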